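/- Translation covariance: for k ∈ ℝⁿ, the transform of the shifted function f(· − k) satisfies (S_ψ f(·−k))(b,u,θ) = e^{−i u·k + i(A/B)(|k|² − k·b)} · (S_ψ [f(·) e^{i(A/B) k·(·)}])(b − k, u, θ). -/

import Mathlib

open MeasureTheory Complex Matrix

noncomputable section

/-- squared Euclidean norm on ℝⁿ -/
def nsq {n : ℕ} (x : Fin n → ℝ) : ℝ := ∑ i, x i ^ 2

/-- Euclidean dot product -/
def dotR {n : ℕ} (x u : Fin n → ℝ) : ℝ := ∑ i, x i * u i

/-- determinant of the diagonal matrix A_u -/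
def detA {n : ℕ} (u : Fin n → ℝ) : ℝ := ∏ i, u i

/-- action of the diagonal matrix A_u on a vector -/
def Adiag {n : ℕ} (u x : Fin n → ℝ) : Fin n → ℝ := fun i => u i * x i

/-- unimodular exponential e^{i r} -/
def eI (r : ℝ) : ℂ := Complex.exp (Complex.I * (r : ℂ))

/-- linear canonical Stockwell kernel ψ_{M,b,u}^θ -/
def kern {n : ℕ} (A B : ℝ) (ψ : (Fin n → ℝ) → ℂ)
    (R : Matrix (Fin n) (Fin n) ℝ) (b u x : Fin n → ℝ) : ℂ :=
  ((|detA u| : ℝ) : ℂ) * eI (dotR x u + (A / (2 * B)) * nsq b - (A / (2 * B)) * nsq x) *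
    ψ (R.mulVec (Adiag u (x - b)))

/-- the linear canonical Stockwell transform -/
def Sw {n : ℕ} (A B : ℝ) (ψ : (Fin n → ℝ) → ℂ)
    (R : Matrix (Fin n) (Fin n) ℝ) (f : (Fin n → ℝ) → ℂ) (b u : Fin n → ℝ) : ℂ :=
  (((2 * Real.pi) ^ (-(n : ℝ) / 2) : ℝ) : ℂ) *
    ∫ x, f x * (starRingEnd ℂ) (kern A B ψ R b u x)

/-- Fourier transform with symmetric normalization -/
def Fhat {n : ℕ} (g : (Fin n → ℝ) → ℂ) (w : Fin n → ℝ) : ℂ :=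
  (((2 * Real.pi) ^ (-(n : ℝ) / 2) : ℝ) : ℂ) * ∫ x, g x * eI (-(dotR w x))


/-!
Substituting `x ↦ x + k` in the integral defining `Sw` moves the shift from `f` onto the kernel.
Since the chirp `|x|²` is quadratic, `kern b (x + k)` differs from `kern (b - k) x` only by a
unimodular factor: one part is constant in `x` and gives the prefactor, the other is the
linear chirp `e^{-i (A/B) k·x}`, which is absorbed into the new signal.
-/

lemma eI_add (a b : ℝ) : eI (a + b) = eI a * eI b := by
  simp only [eI, ofReal_add, mul_add, Complex.exp_add]

lemma conj_eI (r : ℝ) : (starRingEnd ℂ) (eI r) = eI (-r) := by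
  simp [eI, ← Complex.exp_conj]

lemma dotR_comm {n : ℕ} (x u : Fin n → ℝ) : dotR x u = dotR u x := by
  simp only [dotR, mul_comm]

lemma dotR_add_left {n : ℕ} (x k u : Fin n → ℝ) :
    dotR (x + k) u = dotR x u + dotR k u := by
  simp only [dotR, Pi.add_apply, add_mul, Finset.sum_add_distrib]

lemma nsq_add {n : ℕ} (x k : Fin n → ℝ) :
    nsq (x + k) = nsq x + 2 * dotR k x + nsq k := by
  simp only [nsq, dotR, Pi.add_apply, Finset.mul_sum, ← Finset.sum_add_distrib]
  exact Finset.sum_congr rfl fun i _ => by ring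

lemma nsq_sub {n : ℕ} (b k : Fin n → ℝ) :
    nsq (b - k) = nsq b - 2 * dotR k b + nsq k := by
  simp only [nsq, dotR, Pi.sub_apply, Finset.mul_sum, ← Finset.sum_sub_distrib,
    ← Finset.sum_add_distrib]
  exact Finset.sum_congr rfl fun i _ => by ring

lemma kern_add_right {n : ℕ} (A B : ℝ) (ψ : (Fin n → ℝ) → ℂ)
    (R : Matrix (Fin n) (Fin n) ℝ) (k b u x : Fin n → ℝ) :
    kern A B ψ R b u (x + k) =
      eI (-(-(dotR u k) + (A / B) * (nsq k - dotR k b))) * eI (-((A / B) * dotR k x)) *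
        kern A B ψ R (b - k) u x := by
  have phase : dotR (x + k) u + A / (2 * B) * nsq b - A / (2 * B) * nsq (x + k) =
      -(-(dotR u k) + (A / B) * (nsq k - dotR k b)) + -((A / B) * dotR k x) +
        (dotR x u + A / (2 * B) * nsq (b - k) - A / (2 * B) * nsq x) := by
    rw [nsq_add, nsq_sub, dotR_add_left, dotR_comm k u, div_mul_eq_div_div]
    ring
  simp only [kern, phase, eI_add, show x + k - b = x - (b - k) by abel]
  ring

lemma Sw_comp_sub {n : ℕ} (A B : ℝ) (ψ : (Fin n → ℝ) → ℂ)
    (R : Matrix (Fin n) (Fin n) ℝ) (f : (Fin n → ℝ) → ℂ) (k b u : Fin n → ℝ) :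
    Sw A B ψ R (fun x => f (x - k)) b u =
      (((2 * Real.pi) ^ (-(n : ℝ) / 2) : ℝ) : ℂ) *
        ∫ x, f x * (starRingEnd ℂ) (kern A B ψ R b u (x + k)) := by
  rw [Sw, ← integral_add_right_eq_self _ k]
  simp only [add_sub_cancel_right]

theorem stmt6_general {n : ℕ} (A B : ℝ)
    (ψ : (Fin n → ℝ) → ℂ)
    (R : Matrix (Fin n) (Fin n) ℝ)
    (f : (Fin n → ℝ) → ℂ)
    (k b u : Fin n → ℝ) :
    Sw A B ψ R (fun x => f (x - k)) b u
      = eI (-(dotR u k) + (A / B) * (nsq k - dotR k b)) *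
          Sw A B ψ R (fun z => f z * eI ((A / B) * dotR k z)) (b - k) u := by
  simp only [Sw_comp_sub, kern_add_right, map_mul, conj_eI, neg_neg]
  rw [Sw, mul_left_comm, ← integral_const_mul (eI _)]
  congr 2 with x
  ring

theorem stmt6 {n : ℕ} (A B : ℝ) (hB : B ≠ 0)
    (ψ : (Fin n → ℝ) → ℂ) (hψ : MemLp ψ 2 (volume : Measure (Fin n → ℝ)))
    (R : Matrix (Fin n) (Fin n) ℝ) (hR : R * Rᵀ = 1) (hRdet : R.det = 1)
    (f : (Fin n → ℝ) → ℂ) (hf : MemLp f 2 (volume : Measure (Fin n → ℝ)))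
    (k b u : Fin n → ℝ) (hu : ∀ i, u i ≠ 0) :
    Sw A B ψ R (fun x => f (x - k)) b u
      = eI (-(dotR u k) + (A / B) * (nsq k - dotR k b)) *
          Sw A B ψ R (fun z => f z * eI ((A / B) * dotR k z)) (b - k) u :=
  stmt6_general A B ψ R f k b u
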